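/- Fix l > 0 and m ≥ 1. For λ = (λ₁,…,λ_m) with λ₁ > ⋯ > λ_m > 0 and w = (w₁,…,w_{m−1}) with w_j > 0 and Σ_{j=1}^{m−1} w_j < 1, set w_m = 1 − Σ_{j=1}^{m−1} w_j and define complex numbers κ₀,…,κ_{2m} as the coefficients of Σ_{j=0}^{2m} κ_j z^j = ∏_{j=1}^m (z² − λ_j²) − i·l·z·Σ_{j=1}^m w_j ∏_{k≠j} (z² − λ_k²). (This polynomial equals det(zI − 𝒥 − i·l·I_{1×1}) when (λ_j, w_j) are the spectral data of the corresponding 2m×2m zero-diagonal Jacobi matrix 𝒥.) Then the even-index coefficients κ_{2j} are real and the odd-index coefficients κ_{2j+1} are purely imaginary, and the Jacobian determinant of the map (λ₁,…,λ_m, w₁,…,w_{m−1}) ↦ (Re κ₀, Im κ₁, Re κ₂, …, Im κ_{2m−3}, Re κ_{2m−2}) satisfies |det ∂(Re κ₀, Im κ₁, …, Re κ_{2m−2})/∂(λ₁,…,λ_m,w₁,…,w_{m−1})| = 2^m l^{m−1} ∏_{j=1}^m λ_j · ∏_{1≤j<k≤m} |λ_j² − λ_k²|². -/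

import Mathlib

open MeasureTheory Matrix Polynomial Finset

/-- The polynomial `∏ (z² - λ_j²) - i·l·z·Σ_j w_j ∏_{k≠j} (z² - λ_k²)`, which is
`det(zI - 𝒥 - i·l·I₁ₓ₁)` when `(λ_j, w_j)` are the spectral data of the corresponding
`2m × 2m` zero-diagonal Jacobi matrix `𝒥`. -/
noncomputable def kappaPolyHC (m : ℕ) (l : ℝ) (lam : Fin m → ℝ) (w : Fin m → ℝ) :
    Polynomial ℂ :=
  ∏ j : Fin m, (X ^ 2 - C ((lam j : ℂ) ^ 2)) -
    C (Complex.I * (l : ℂ)) * X *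
      ∑ j : Fin m, C ((w j : ℂ)) * ∏ k ∈ Finset.univ.erase j, (X ^ 2 - C ((lam k : ℂ) ^ 2))

/-- `kappaPolyHC` as a function of a single vector `x ∈ ℝ^(2m-1)` of variables
`(λ₁,…,λ_m, w₁,…,w_{m-1})`, with `w_m := 1 - Σ_{j<m} w_j`. -/
noncomputable def kappaMapHC (m : ℕ) (l : ℝ) (x : Fin (2 * m - 1) → ℝ) : Polynomial ℂ :=
  kappaPolyHC m l
    (fun j : Fin m => x ⟨(j : ℕ), by have := j.isLt; omega⟩)
    (fun j : Fin m => if h : (j : ℕ) < m - 1 then x ⟨m + (j : ℕ), by omega⟩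
      else 1 - ∑ k : Fin (m - 1), x ⟨m + (k : ℕ), by have := k.isLt; omega⟩)

/-- The real vector `(Re κ₀, Im κ₁, Re κ₂, …)`: component `i` is `Re κ_i` for even `i`
and `Im κ_i` for odd `i`. -/
noncomputable def kappaReImH (m : ℕ) (l : ℝ) (x : Fin (2 * m - 1) → ℝ)
    (i : Fin (2 * m - 1)) : ℝ :=
  if (i : ℕ) % 2 = 0 then ((kappaMapHC m l x).coeff (i : ℕ)).re
  else ((kappaMapHC m l x).coeff (i : ℕ)).im

/-!
Writing `μ_k = λ_k²`, `P_k = ∏_{i ≠ k} (y - μ_i)` and `A = ∏_k (y - μ_k)`, the polynomial is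
`A(z²) - i l z B(z²)` with `B = Σ_k w_k P_k`, so `κ_{2r}` is the real coefficient `A_r` and
`κ_{2r+1} = -i l B_r`. The `A_r` do not depend on `w`, so after sorting rows into even/odd and
columns into `λ`/`w` the Jacobian is block lower triangular, with diagonal blocks
`∂A_r/∂λ_k = -2 λ_k (P_k)_r` and `∂(-l B_r)/∂w_j = -l (P_j - P_m)_r`. Both blocks reduce to the
coefficient matrix `M` of the `P_k`, and `V(μ) M = diag(P_k(μ_k))` for the Vandermonde matrix
`V(μ)`, whence `|det M| = |det V(μ)| = ∏_{j<k} |λ_j² - λ_k²|`.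
-/

open Lagrange

section Nodal

variable {R : Type*} [CommRing R] {n : ℕ}

noncomputable def nodalEraseCoeffMatrix (μ : Fin n → R) : Matrix (Fin n) (Fin n) R :=
  of fun r k => (nodal (univ.erase k) μ).coeff r

theorem vandermonde_mul_nodalEraseCoeffMatrix [Nontrivial R] (μ : Fin n → R) :
    vandermonde μ * nodalEraseCoeffMatrix μ =
      diagonal fun k => ∏ i ∈ univ.erase k, (μ k - μ i) := by
  ext a k
  have hdeg : (nodal (univ.erase k) μ).natDegree < n := by
    rw [natDegree_nodal, card_erase_of_mem (mem_univ k), card_univ, Fintype.card_fin]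
    exact Nat.sub_lt (Fin.pos k) one_pos
  have heval : ∑ r : Fin n, μ a ^ (r : ℕ) * (nodal (univ.erase k) μ).coeff r =
      ∏ i ∈ univ.erase k, (μ a - μ i) := by
    rw [← eval_nodal, eval_eq_sum_range' hdeg, ← Fin.sum_univ_eq_sum_range]
    simp only [mul_comm]
  rw [mul_apply]
  simp only [vandermonde_apply, nodalEraseCoeffMatrix, of_apply, heval]
  rcases eq_or_ne a k with rfl | hak
  · rw [diagonal_apply_eq]
  · rw [diagonal_apply_ne _ hak]
    exact prod_eq_zero (mem_erase.mpr ⟨hak, mem_univ a⟩) (sub_self _)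

theorem nodal_univ_update {ι : Type*} [Fintype ι] [DecidableEq ι] (μ : ι → R)
    (k : ι) (a : R) : nodal univ (Function.update μ k a) = (X - C a) * nodal (univ.erase k) μ := by
  rw [nodal_eq_mul_nodal_erase (mem_univ k), Function.update_self]
  exact congrArg _ (prod_congr rfl fun i hi => by rw [Function.update_of_ne (ne_of_mem_erase hi)])

theorem coeff_nodal_univ_erase (μ : Fin (n + 1) → R) (k : Fin (n + 1)) :
    (nodal (univ.erase k) μ).coeff n = 1 := by
  nontriviality R
  have hdeg : (nodal (univ.erase k) μ).natDegree = n := by simp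
  simpa [hdeg] using (nodal_monic (s := univ.erase k) (v := μ)).coeff_natDegree

-- Rows `r < n` suffice: the differences of these monic polynomials of degree `n` have degree `< n`.
noncomputable def nodalEraseSubLastCoeffMatrix (μ : Fin (n + 1) → R) : Matrix (Fin n) (Fin n) R :=
  of fun r j => (nodal (univ.erase j.castSucc) μ - nodal (univ.erase (Fin.last n)) μ).coeff r

-- Subtracting the last column from the others turns the last row into `(0, …, 0, 1)`.
theorem det_nodalEraseSubLastCoeffMatrix (μ : Fin (n + 1) → R) :
    (nodalEraseSubLastCoeffMatrix μ).det = (nodalEraseCoeffMatrix μ).det := by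
  set M := nodalEraseCoeffMatrix μ
  set M' : Matrix (Fin (n + 1)) (Fin (n + 1)) R :=
    of fun r k => M r k - if k = Fin.last n then 0 else M r (Fin.last n)
  have hcol : M'.det = M.det := by
    rw [← det_transpose, ← det_transpose M]
    refine det_eq_of_forall_row_eq_smul_add_const
      (fun k => if k = Fin.last n then 0 else -1) (Fin.last n) (if_pos rfl) fun k r => ?_
    simp only [M', transpose_apply, of_apply]
    split_ifs <;> ring
  have hlast : ∀ k, M' (Fin.last n) k = if k = Fin.last n then 1 else 0 := by
    intro k
    simp only [M', M, nodalEraseCoeffMatrix, of_apply, Fin.val_last, coeff_nodal_univ_erase]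
    split_ifs <;> simp
  rw [← hcol, det_succ_row M' (Fin.last n), Fin.sum_univ_castSucc]
  simp only [hlast, Fin.castSucc_ne_last, if_false, mul_zero, zero_mul, sum_const_zero,
    if_true, zero_add, Fin.succAbove_last, Fin.val_last, ← two_mul, pow_mul]
  rw [neg_one_sq, one_pow, one_mul, one_mul]
  congr 1
  ext r j
  simp [M', M, nodalEraseCoeffMatrix, nodalEraseSubLastCoeffMatrix, Fin.castSucc_ne_last]

end Nodal

section Ordered

variable {K : Type*} [Field K] [LinearOrder K] [IsStrictOrderedRing K] {n : ℕ}

theorem abs_det_vandermonde (v : Fin n → K) :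
    |(vandermonde v).det| = ∏ i, ∏ j ∈ Ioi i, |v i - v j| := by
  rw [det_vandermonde, abs_prod]
  exact prod_congr rfl fun i _ => by rw [abs_prod]; exact prod_congr rfl fun j _ => abs_sub_comm _ _

theorem abs_det_nodalEraseCoeffMatrix (μ : Fin n → K) :
    |(nodalEraseCoeffMatrix μ).det| = |(vandermonde μ).det| := by
  by_cases hμ : Function.Injective μ
  · have hV : |(vandermonde μ).det| ≠ 0 := abs_ne_zero.mpr (det_vandermonde_ne_zero_iff.mpr hμ)
    have hprod := congrArg (fun A => |det A|) (vandermonde_mul_nodalEraseCoeffMatrix μ)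
    simp only [det_mul, det_diagonal, abs_mul] at hprod
    refine mul_left_cancel₀ hV (hprod.trans ?_)
    have hoff := prod_prod_Ioi_mul_eq_prod_prod_off_diag fun a b => |μ b - μ a|
    simp only [compl_singleton] at hoff
    rw [abs_prod, det_vandermonde]
    simp only [abs_prod, ← hoff, prod_mul_distrib]
    congr 1
    exact prod_congr rfl fun i _ => prod_congr rfl fun j _ => abs_sub_comm _ _
  · obtain ⟨i, j, hij, hne⟩ : ∃ i j, μ i = μ j ∧ i ≠ j := by
      simpa [Function.Injective, and_comm] using hμ
    have hcol : nodal (univ.erase i) μ = nodal (univ.erase j) μ := by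
      refine mul_left_cancel₀ (X_sub_C_ne_zero (μ i)) ?_
      rw [← nodal_eq_mul_nodal_erase (mem_univ i), hij, ← nodal_eq_mul_nodal_erase (mem_univ j)]
    rw [det_zero_of_column_eq hne fun r => by simp [nodalEraseCoeffMatrix, hcol],
      det_vandermonde_eq_zero_iff.mpr ⟨i, j, hij, hne⟩]

end Ordered

theorem hasDerivAt_sum_update_mul {ι : Type*} [Fintype ι] [DecidableEq ι] (y c : ι → ℝ) (j : ι)
    (t : ℝ) : HasDerivAt (fun t => ∑ i, Function.update y j t i * c i) (c j) t := by
  have h := HasDerivAt.fun_sum fun i (_ : i ∈ univ) =>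
    (hasDerivAt_pi.mp (hasDerivAt_update y j t) i).mul_const (c i)
  simpa [Pi.single_apply] using h

theorem kappaPolyHC_eq_expand (m : ℕ) (l : ℝ) (lam w : Fin m → ℝ) :
    kappaPolyHC m l lam w =
      expand ℂ 2 ((nodal univ fun k => lam k ^ 2).map (algebraMap ℝ ℂ)) -
        C (Complex.I * l) * X * expand ℂ 2
          ((∑ k, C (w k) * nodal (univ.erase k) fun i => lam i ^ 2).map (algebraMap ℝ ℂ)) := by
  simp [kappaPolyHC, nodal, Polynomial.map_prod, map_prod, Polynomial.map_sum, map_sum]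

theorem coeff_kappaPolyHC_two_mul (m : ℕ) (l : ℝ) (lam w : Fin m → ℝ) (r : ℕ) :
    (kappaPolyHC m l lam w).coeff (2 * r) = ((nodal univ fun k => lam k ^ 2).coeff r : ℂ) := by
  have hodd : (X * expand ℂ 2
      ((∑ k, C (w k) * nodal (univ.erase k) fun i => lam i ^ 2).map (algebraMap ℝ ℂ))).coeff
        (2 * r) = 0 := by
    rcases r with _ | r
    · simp
    · rw [show 2 * (r + 1) = 2 * r + 1 + 1 by ring, coeff_X_mul, coeff_expand two_pos,
        if_neg (by omega)]
  rw [kappaPolyHC_eq_expand, coeff_sub, mul_assoc, coeff_C_mul, hodd, coeff_expand_mul' two_pos]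
  simp

theorem coeff_kappaPolyHC_two_mul_add_one (m : ℕ) (l : ℝ) (lam w : Fin m → ℝ) (r : ℕ) :
    (kappaPolyHC m l lam w).coeff (2 * r + 1) =
      -(Complex.I * l * ∑ k, w k * (nodal (univ.erase k) fun i => lam i ^ 2).coeff r) := by
  rw [kappaPolyHC_eq_expand, coeff_sub, coeff_expand two_pos, if_neg (by omega), mul_assoc,
    coeff_C_mul, coeff_X_mul, coeff_expand_mul' two_pos, zero_sub]
  simp [coeff_C_mul]

namespace KappaJacobian

variable {n : ℕ}

def lamIdx (k : Fin (n + 1)) : Fin (2 * (n + 1) - 1) := ⟨k, by omega⟩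

def wIdx (j : Fin n) : Fin (2 * (n + 1) - 1) := ⟨n + 1 + j, by omega⟩

def evenIdx (r : Fin (n + 1)) : Fin (2 * (n + 1) - 1) := ⟨2 * r, by omega⟩

def oddIdx (r : Fin n) : Fin (2 * (n + 1) - 1) := ⟨2 * r + 1, by omega⟩

theorem lamIdx_injective : Function.Injective (lamIdx (n := n)) := fun a b h => by
  simpa [lamIdx, Fin.ext_iff] using h

theorem wIdx_injective : Function.Injective (wIdx (n := n)) := fun a b h => by
  simpa [wIdx, Fin.ext_iff] using h

theorem lamIdx_ne_wIdx (k : Fin (n + 1)) (j : Fin n) : lamIdx k ≠ wIdx j := by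
  simp [lamIdx, wIdx, Fin.ext_iff]; omega

noncomputable def paramIdx : Fin (n + 1) ⊕ Fin n ≃ Fin (2 * (n + 1) - 1) :=
  Equiv.ofBijective (Sum.elim lamIdx wIdx) <| (Fintype.bijective_iff_injective_and_card _).mpr
    ⟨lamIdx_injective.sumElim wIdx_injective lamIdx_ne_wIdx, by simp; omega⟩

noncomputable def coeffIdx : Fin (n + 1) ⊕ Fin n ≃ Fin (2 * (n + 1) - 1) :=
  Equiv.ofBijective (Sum.elim evenIdx oddIdx) <| (Fintype.bijective_iff_injective_and_card _).mpr
    ⟨Function.Injective.sumElim (fun a b h => by simpa [evenIdx, Fin.ext_iff] using h)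
      (fun a b h => by simpa [oddIdx, Fin.ext_iff] using h)
      (fun a b h => by simp [evenIdx, oddIdx, Fin.ext_iff] at h; omega), by simp; omega⟩

noncomputable def weights (x : Fin (2 * (n + 1) - 1) → ℝ) : Fin (n + 1) → ℝ :=
  Fin.snoc (x ∘ wIdx) (1 - ∑ j, x (wIdx j))

theorem kappaMapHC_succ (l : ℝ) (x : Fin (2 * (n + 1) - 1) → ℝ) :
    kappaMapHC (n + 1) l x = kappaPolyHC (n + 1) l (x ∘ lamIdx) (weights x) :=
  rfl

theorem kappaReImH_evenIdx (l : ℝ) (x : Fin (2 * (n + 1) - 1) → ℝ) (r : Fin (n + 1)) :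
    kappaReImH (n + 1) l x (evenIdx r) = (nodal univ fun k => x (lamIdx k) ^ 2).coeff r := by
  rw [kappaReImH, if_pos (by simp [evenIdx]), kappaMapHC_succ]
  exact congrArg Complex.re (coeff_kappaPolyHC_two_mul _ _ _ _ r)

theorem kappaReImH_oddIdx (l : ℝ) (x : Fin (2 * (n + 1) - 1) → ℝ) (r : Fin n) :
    kappaReImH (n + 1) l x (oddIdx r) =
      -(l * ∑ k, weights x k * (nodal (univ.erase k) fun i => x (lamIdx i) ^ 2).coeff r) := by
  rw [kappaReImH, if_neg (by simp [oddIdx]), kappaMapHC_succ]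
  simp [oddIdx, coeff_kappaPolyHC_two_mul_add_one]

theorem sum_weights_mul (x : Fin (2 * (n + 1) - 1) → ℝ) (c : Fin (n + 1) → ℝ) :
    ∑ k, weights x k * c k =
      c (Fin.last n) + ∑ j, x (wIdx j) * (c j.castSucc - c (Fin.last n)) := by
  simp only [Fin.sum_univ_castSucc, weights, Fin.snoc_castSucc, Fin.snoc_last,
    Function.comp_apply, mul_sub, sum_sub_distrib, ← sum_mul]
  ring

noncomputable def jacobian (l : ℝ) (x : Fin (2 * (n + 1) - 1) → ℝ) :
    Matrix (Fin (2 * (n + 1) - 1)) (Fin (2 * (n + 1) - 1)) ℝ :=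
  of fun i j => deriv (fun t => kappaReImH (n + 1) l (Function.update x j t) i) (x j)

theorem update_lamIdx_comp_lamIdx (x : Fin (2 * (n + 1) - 1) → ℝ) (k : Fin (n + 1)) (t : ℝ) :
    Function.update x (lamIdx k) t ∘ lamIdx = Function.update (x ∘ lamIdx) k t :=
  Function.update_comp_eq_of_injective x lamIdx_injective k t

theorem jacobian_evenIdx_lamIdx (l : ℝ) (x : Fin (2 * (n + 1) - 1) → ℝ) (r k : Fin (n + 1)) :
    jacobian l x (evenIdx r) (lamIdx k) =
      (nodal (univ.erase k) fun i => x (lamIdx i) ^ 2).coeff r * (-2 * x (lamIdx k)) := by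
  set P := nodal (univ.erase k) fun i => x (lamIdx i) ^ 2
  have hfun : (fun t => kappaReImH (n + 1) l (Function.update x (lamIdx k) t) (evenIdx r)) =
      fun t => (X * P).coeff r - t ^ 2 * P.coeff r := by
    funext t
    have hsq : (fun i => Function.update x (lamIdx k) t (lamIdx i) ^ 2) =
        Function.update (fun i => x (lamIdx i) ^ 2) k (t ^ 2) := by
      change (· ^ 2) ∘ (Function.update x (lamIdx k) t ∘ lamIdx) = _
      rw [update_lamIdx_comp_lamIdx, Function.comp_update]
      rfl
    rw [kappaReImH_evenIdx, hsq, nodal_univ_update, sub_mul, coeff_sub, coeff_C_mul]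
  have hderiv := ((hasDerivAt_pow 2 (x (lamIdx k))).mul_const (P.coeff r)).const_sub
    ((X * P).coeff r)
  rw [jacobian, of_apply, hfun, hderiv.deriv]
  ring

theorem jacobian_evenIdx_wIdx (l : ℝ) (x : Fin (2 * (n + 1) - 1) → ℝ) (r : Fin (n + 1))
    (j : Fin n) : jacobian l x (evenIdx r) (wIdx j) = 0 := by
  have hfun : (fun t => kappaReImH (n + 1) l (Function.update x (wIdx j) t) (evenIdx r)) =
      fun _ => kappaReImH (n + 1) l x (evenIdx r) := by
    funext t
    simp only [kappaReImH_evenIdx, Function.update_of_ne (lamIdx_ne_wIdx _ j)]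
  rw [jacobian, of_apply, hfun, deriv_const]

theorem jacobian_oddIdx_wIdx (l : ℝ) (x : Fin (2 * (n + 1) - 1) → ℝ) (r j : Fin n) :
    jacobian l x (oddIdx r) (wIdx j) =
      -l * (nodal (univ.erase j.castSucc) (fun i => x (lamIdx i) ^ 2) -
        nodal (univ.erase (Fin.last n)) fun i => x (lamIdx i) ^ 2).coeff r := by
  set c : Fin (n + 1) → ℝ := fun k => (nodal (univ.erase k) fun i => x (lamIdx i) ^ 2).coeff r
  have hfun : (fun t => kappaReImH (n + 1) l (Function.update x (wIdx j) t) (oddIdx r)) =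
      fun t => -(l * (c (Fin.last n) + ∑ j', Function.update (fun i => x (wIdx i)) j t j' *
        (c j'.castSucc - c (Fin.last n)))) := by
    funext t
    rw [kappaReImH_oddIdx, sum_weights_mul]
    simp only [Function.update_of_ne (lamIdx_ne_wIdx _ j),
      Function.update_apply_of_injective _ wIdx_injective]
    rfl
  have hderiv := (((hasDerivAt_sum_update_mul (fun i => x (wIdx i))
    (fun j' => c j'.castSucc - c (Fin.last n)) j (x (wIdx j))).const_add
      (c (Fin.last n))).const_mul l).fun_neg
  rw [jacobian, of_apply, hfun, hderiv.deriv, coeff_sub]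
  ring

theorem jacobian_submatrix (l : ℝ) (x : Fin (2 * (n + 1) - 1) → ℝ) :
    (jacobian l x).submatrix coeffIdx paramIdx =
      fromBlocks
        (nodalEraseCoeffMatrix (fun i => x (lamIdx i) ^ 2) * diagonal fun k => -2 * x (lamIdx k))
        0 (of fun r k => jacobian l x (oddIdx r) (lamIdx k))
        (-l • nodalEraseSubLastCoeffMatrix fun i => x (lamIdx i) ^ 2) := by
  ext (r | r) (k | j)
  · simp [coeffIdx, paramIdx, jacobian_evenIdx_lamIdx, nodalEraseCoeffMatrix]
  · simp [coeffIdx, paramIdx, jacobian_evenIdx_wIdx]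
  · rfl
  · simp [coeffIdx, paramIdx, jacobian_oddIdx_wIdx, nodalEraseSubLastCoeffMatrix]

theorem abs_det_jacobian (l : ℝ) (x : Fin (2 * (n + 1) - 1) → ℝ) :
    |(jacobian l x).det| = 2 ^ (n + 1) * |l| ^ n * |∏ k, x (lamIdx k)| *
      ∏ j, ∏ k ∈ Ioi j, |x (lamIdx j) ^ 2 - x (lamIdx k) ^ 2| ^ 2 := by
  rw [← abs_det_submatrix_equiv_equiv coeffIdx paramIdx, jacobian_submatrix,
    det_fromBlocks_zero₁₂, det_mul, det_diagonal, det_smul, det_nodalEraseSubLastCoeffMatrix]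
  simp only [abs_mul, abs_pow, abs_neg, abs_prod, abs_two, prod_mul_distrib, prod_const,
    card_univ, Fintype.card_fin, abs_det_nodalEraseCoeffMatrix, abs_det_vandermonde, prod_pow]
  ring

end KappaJacobian

/-- for `det(zI - 𝒥 - i·l·I₁ₓ₁)` in the even case, the even-index
coefficients are real and the odd-index coefficients purely imaginary, and the Jacobian of
`(λ₁,…,λ_m, w₁,…,w_{m-1}) ↦ (Re κ₀, Im κ₁, …, Im κ_{2m-3}, Re κ_{2m-2})` has absolute
value `2^m l^{m-1} ∏ λ_j ∏_{j<k} |λ_j² - λ_k²|²`. -/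
theorem jacobian_nonhermitian_even (m : ℕ) (hm : 1 ≤ m) (l : ℝ) (hl : 0 < l)
    (x : Fin (2 * m - 1) → ℝ)
    (lam : Fin m → ℝ) (hlam : lam = fun j : Fin m => x ⟨(j : ℕ), by have := j.isLt; omega⟩)
    (hpos : ∀ j, 0 < lam j) :
    (∀ j : ℕ, ((kappaMapHC m l x).coeff (2 * j)).im = 0 ∧
      ((kappaMapHC m l x).coeff (2 * j + 1)).re = 0) ∧
    |(Matrix.of fun i j : Fin (2 * m - 1) =>
        deriv (fun t => kappaReImH m l (Function.update x j t) i) (x j)).det| =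
      2 ^ m * l ^ (m - 1) * (∏ j, lam j) *
        ∏ j : Fin m, ∏ k ∈ Finset.Ioi j, |lam j ^ 2 - lam k ^ 2| ^ 2 := by
  obtain ⟨n, rfl⟩ : ∃ n, m = n + 1 := ⟨m - 1, by omega⟩
  subst hlam
  refine ⟨fun r => ?_, ?_⟩
  · rw [KappaJacobian.kappaMapHC_succ, coeff_kappaPolyHC_two_mul, coeff_kappaPolyHC_two_mul_add_one]
    simp
  · have h := KappaJacobian.abs_det_jacobian l x
    rw [abs_of_pos hl,
      abs_of_pos (prod_pos fun k _ => hpos k : 0 < ∏ k, x (KappaJacobian.lamIdx k))] at h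
    rw [Nat.add_sub_cancel]
    exact h
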